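/- Fix positive integers r, n, ε = e^{2πi/r}, a letter a = z_{i,j}, and k ≥ 1. Then S_{a^k}(n) = Σ over integer partitions b₁ + ⋯ + b_q = k (with multiplicities m_s = #{i : b_i = s}) of (1/(m₁!⋯m_k!)) · ∏_{t=1}^q (1/b_t) A_{[b_t a]}(n), where [b a] = z_{bi, bj mod r} and A_{z_{m,l}}(n) = Σ_{p=1}^n ε^{lp}/p^m, and S_{a^k}(n) = Σ_{n ≥ n₁ ≥ … ≥ n_k ≥ 1} ∏_{s=1}^k ε^{j n_s}/n_s^{i}. -/
import Mathlib


open Finsupp Finset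

/-- A letter `z_{i,j}`: first subscript a natural number (positive in intended use),
second subscript in `ℤ/r`. -/
abbrev QLetter (r : ℕ) := ℕ × ZMod r

/-- The Euler algebra `E_r` as a vector space: formal `ℂ`-linear combinations of words. -/
abbrev EulerAlg (r : ℕ) := List (QLetter r) →₀ ℂ

/-- `[a,b]`: add first subscripts, add second subscripts mod `r`. -/
def ladd {r : ℕ} (a b : QLetter r) : QLetter r := (a.1 + b.1, a.2 + b.2)

/-- Quasi-shuffle product of two words, inductively. -/
noncomputable def qmulW {r : ℕ} : List (QLetter r) → List (QLetter r) → EulerAlg r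
  | [], w => Finsupp.single w 1
  | a :: w, [] => Finsupp.single (a :: w) 1
  | a :: w, b :: v =>
      (qmulW w (b :: v)).mapDomain (a :: ·) +
      (qmulW (a :: w) v).mapDomain (b :: ·) +
      (qmulW w v).mapDomain (ladd a b :: ·)
  termination_by w v => w.length + v.length

/-- Bilinear extension of the quasi-shuffle product to `E_r`. -/
noncomputable def qmul {r : ℕ} (x y : EulerAlg r) : EulerAlg r :=
  x.sum fun w c => y.sum fun v d => (c * d) • qmulW w v
noncomputable def eps (r : ℕ) : ℂ := Complex.exp (2 * Real.pi * Complex.I / r)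

/-- `A_w(n)`, the strict multiple harmonic sum coded by the word `w`. -/
noncomputable def Aword (r n : ℕ) : List (QLetter r) → ℂ
  | [] => 1
  | a :: t => ∑ m ∈ Finset.Icc 1 n, eps r ^ (a.2.val * m) / (m : ℂ) ^ a.1 * Aword r (m - 1) t

/-- `S_w(n)`, the weak multiple harmonic sum coded by the word `w`. -/
noncomputable def Sword (r n : ℕ) : List (QLetter r) → ℂ
  | [] => 1
  | a :: t => ∑ m ∈ Finset.Icc 1 n, eps r ^ (a.2.val * m) / (m : ℂ) ^ a.1 * Sword r m t


namespace SPowerAux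

open Finset

/-! ### Complete homogeneous and power sums in the variables `x 1, …, x n` -/

noncomputable def hh (x : ℕ → ℂ) : ℕ → ℕ → ℂ
  | 0, _ => 1
  | k+1, n => ∑ m ∈ Finset.Icc 1 n, x m * hh x k m

noncomputable def pp (x : ℕ → ℂ) (b n : ℕ) : ℂ := ∑ m ∈ Finset.Icc 1 n, x m ^ b

lemma hh_succ (x : ℕ → ℂ) (k n : ℕ) :
    hh x (k+1) n = ∑ m ∈ Finset.Icc 1 n, x m * hh x k m := rfl

lemma hh_zero (x : ℕ → ℂ) (n : ℕ) : hh x 0 n = 1 := rfl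

lemma pp_succ (x : ℕ → ℂ) (b n : ℕ) : pp x b (n+1) = pp x b n + x (n+1) ^ b := by
  rw [pp, pp, Finset.sum_Icc_succ_top (by omega)]

lemma hh_top (x : ℕ → ℂ) (k n : ℕ) :
    hh x k (n+1) = ∑ c ∈ Finset.range (k+1), x (n+1) ^ c * hh x (k-c) n := by
  induction k with
  | zero => simp [hh_zero]
  | succ k ih =>
      rw [hh_succ, Finset.sum_Icc_succ_top (by omega), ← hh_succ, ih,
        Finset.mul_sum]
      conv_rhs => rw [Finset.sum_range_succ']
      simp only [Nat.succ_sub_succ, pow_zero, one_mul, Nat.sub_zero]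
      rw [add_comm]
      congr 1
      exact Finset.sum_congr rfl fun c _ => by ring

lemma newton (x : ℕ → ℂ) :
    ∀ (n : ℕ) (k : ℕ), (k:ℂ) * hh x k n = ∑ b ∈ Finset.Icc 1 k, pp x b n * hh x (k-b) n := by
  intro n
  induction n with
  | zero =>
      intro k
      cases k with
      | zero => simp
      | succ k =>
          rw [hh_succ]
          simp [pp]
  | succ n ih =>
      intro k
      have hrhs : ∀ b ∈ Finset.Icc 1 k,
          pp x b (n+1) * hh x (k-b) (n+1)
            = (∑ c ∈ Finset.range (k-b+1), pp x b n * (x (n+1)^c * hh x (k-b-c) n))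
              + ∑ d ∈ Finset.Icc b k, x (n+1)^d * hh x (k-d) n := by
        intro b hb
        simp only [Finset.mem_Icc] at hb
        rw [pp_succ, hh_top, add_mul, Finset.mul_sum, Finset.mul_sum]
        congr 1
        rw [← Finset.Ico_add_one_right_eq_Icc, Finset.sum_Ico_eq_sum_range]
        have hkb : k + 1 - b = k - b + 1 := by omega
        rw [hkb]
        refine Finset.sum_congr rfl fun c hc => ?_
        simp only [Finset.mem_range] at hc
        have h1 : k - (b + c) = k - b - c := by omega
        rw [h1, pow_add]
        ring
      rw [Finset.sum_congr rfl hrhs, Finset.sum_add_distrib]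
      have hT1 : (∑ b ∈ Finset.Icc 1 k, ∑ c ∈ Finset.range (k-b+1),
            pp x b n * (x (n+1)^c * hh x (k-b-c) n))
          = ∑ c ∈ Finset.range (k+1), ((k-c : ℕ) : ℂ) * (x (n+1)^c * hh x (k-c) n) := by
        rw [Finset.sum_comm' (t' := Finset.range (k+1)) (s' := fun c => Finset.Icc 1 (k-c))
          (by intro b c; simp only [Finset.mem_Icc, Finset.mem_range]; omega)]
        refine Finset.sum_congr rfl fun c hc => ?_
        simp only [Finset.mem_range] at hc
        have hsum : ∀ b ∈ Finset.Icc 1 (k-c), pp x b n * (x (n+1)^c * hh x (k-b-c) n)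
            = x (n+1)^c * (pp x b n * hh x ((k-c)-b) n) := by
          intro b hb
          simp only [Finset.mem_Icc] at hb
          have h2 : k - b - c = (k - c) - b := by omega
          rw [h2]; ring
        rw [Finset.sum_congr rfl hsum, ← Finset.mul_sum, ← ih (k-c)]
        ring
      have hT2 : (∑ b ∈ Finset.Icc 1 k, ∑ d ∈ Finset.Icc b k, x (n+1)^d * hh x (k-d) n)
          = ∑ d ∈ Finset.range (k+1), (d : ℂ) * (x (n+1)^d * hh x (k-d) n) := by
        rw [Finset.sum_comm' (t' := Finset.Icc 1 k) (s' := fun d => Finset.Icc 1 d)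
          (by intro b d; simp only [Finset.mem_Icc]; omega)]
        have h0 : Finset.range (k+1) = insert 0 (Finset.Icc 1 k) := by
          ext a
          simp only [Finset.mem_range, Finset.mem_insert, Finset.mem_Icc]
          omega
        rw [h0, Finset.sum_insert (by simp)]
        simp only [Nat.cast_zero, zero_mul, zero_add]
        refine Finset.sum_congr rfl fun d hd => ?_
        rw [Finset.sum_const, Nat.card_Icc]
        simp only [Nat.add_sub_cancel, nsmul_eq_mul]
      rw [hT1, hT2, hh_top, Finset.mul_sum, ← Finset.sum_add_distrib]
      refine Finset.sum_congr rfl fun c hc => ?_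
      simp only [Finset.mem_range] at hc
      have : ((k - c : ℕ) : ℂ) = (k : ℂ) - (c : ℂ) := by
        rw [Nat.cast_sub (by omega)]
      rw [this]
      ring

/-! ### The partition-indexed sum -/

noncomputable def zinv (m : Multiset ℕ) : ℂ :=
  ∏ s ∈ m.toFinset, (1:ℂ) / (Nat.factorial (m.count s))

noncomputable def W (p : ℕ → ℂ) (m : Multiset ℕ) : ℂ :=
  zinv m * (m.map (fun b => p b / b)).prod

noncomputable def F (p : ℕ → ℂ) (k : ℕ) : ℂ := ∑ P : Nat.Partition k, W p P.parts

lemma zinv_zero : zinv 0 = 1 := by simp [zinv]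

lemma parts_eq_zero (P : Nat.Partition 0) : P.parts = 0 := by
  by_cases h : P.parts = 0
  · exact h
  · obtain ⟨a, ha⟩ := Multiset.exists_mem_of_ne_zero h
    have h1 : a ≤ P.parts.sum := Multiset.single_le_sum (fun x _ => Nat.zero_le x) _ ha
    have h2 := P.parts_pos ha
    rw [P.parts_sum] at h1
    omega

lemma F_zero (p : ℕ → ℂ) : F p 0 = 1 := by
  rw [F, Fintype.sum_unique]
  rw [parts_eq_zero (default : Nat.Partition 0)]
  simp [W, zinv_zero]

lemma zinv_cons (b : ℕ) (m : Multiset ℕ) :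
    zinv (b ::ₘ m) = (1 / ((m.count b : ℂ) + 1)) * zinv m := by
  classical
  have hfact : ∀ c : ℕ, (Nat.factorial c : ℂ) ≠ 0 :=
    fun c => Nat.cast_ne_zero.2 (Nat.factorial_ne_zero c)
  by_cases hb : b ∈ m
  · have hbf : b ∈ m.toFinset := Multiset.mem_toFinset.2 hb
    have ht : (b ::ₘ m).toFinset = m.toFinset := by
      rw [Multiset.toFinset_cons, Finset.insert_eq_self.2 hbf]
    rw [zinv, zinv, ht, ← Finset.mul_prod_erase _ _ hbf, ← Finset.mul_prod_erase _ _ hbf]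
    have hrest : (∏ s ∈ m.toFinset.erase b, (1:ℂ)/(Nat.factorial ((b ::ₘ m).count s)))
        = ∏ s ∈ m.toFinset.erase b, (1:ℂ)/(Nat.factorial (m.count s)) := by
      refine Finset.prod_congr rfl fun s hs => ?_
      rw [Multiset.count_cons_of_ne (Finset.ne_of_mem_erase hs)]
    rw [Multiset.count_cons_self, hrest, Nat.factorial_succ, ← mul_assoc]
    congr 1
    have h1 := hfact (m.count b)
    have h2 : ((m.count b : ℂ) + 1) ≠ 0 := by
      exact_mod_cast (Nat.cast_ne_zero (R := ℂ)).2 (Nat.succ_ne_zero (m.count b))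
    push_cast
    field_simp
  · have hc : m.count b = 0 := Multiset.count_eq_zero.2 hb
    have hbf : b ∉ m.toFinset := by simp [hb]
    rw [zinv, zinv, Multiset.toFinset_cons, Finset.prod_insert hbf]
    have hcb : (b ::ₘ m).count b = 1 := by rw [Multiset.count_cons_self, hc]
    have hrest : (∏ s ∈ m.toFinset, (1:ℂ)/(Nat.factorial ((b ::ₘ m).count s)))
        = ∏ s ∈ m.toFinset, (1:ℂ)/(Nat.factorial (m.count s)) := by
      refine Finset.prod_congr rfl fun s hs => ?_
      have hsb : s ≠ b := fun h => hbf (h ▸ hs)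
      rw [Multiset.count_cons_of_ne hsb]
    rw [hcb, hrest, hc]
    norm_num

lemma W_cons (p : ℕ → ℂ) (b : ℕ) (hb : 0 < b) (m : Multiset ℕ) :
    ((b : ℂ) * ((m.count b : ℂ) + 1)) * W p (b ::ₘ m) = p b * W p m := by
  rw [W, W, zinv_cons, Multiset.map_cons, Multiset.prod_cons]
  have h1 : ((m.count b : ℂ) + 1) ≠ 0 := by
    exact_mod_cast (Nat.cast_ne_zero (R := ℂ)).2 (Nat.succ_ne_zero (m.count b))
  have h2 : (b:ℂ) ≠ 0 := Nat.cast_ne_zero.2 hb.ne'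
  calc ((b : ℂ) * ((m.count b : ℂ) + 1)) *
        ((1 / ((m.count b : ℂ) + 1)) * zinv m * (p b / b * (m.map (fun b => p b / b)).prod))
      = (((m.count b : ℂ) + 1) * ((m.count b : ℂ) + 1)⁻¹) * ((b:ℂ) * (b:ℂ)⁻¹) *
          (p b * (zinv m * (m.map (fun b => p b / b)).prod)) := by
        rw [one_div, div_eq_mul_inv]; ring
    _ = p b * (zinv m * (m.map (fun b => p b / b)).prod) := by
        rw [mul_inv_cancel₀ h1, mul_inv_cancel₀ h2]; ring

/-- Erasing a part `b` from a partition of `k` gives a partition of `k - b`. -/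
def erasePart {k : ℕ} (P : Nat.Partition k) (b : ℕ) (hb : b ∈ P.parts) :
    Nat.Partition (k - b) where
  parts := P.parts.erase b
  parts_pos := fun h => P.parts_pos (Multiset.mem_of_mem_erase h)
  parts_sum := by
    have h1 := P.parts_sum
    have h2 : b + (P.parts.erase b).sum = P.parts.sum := by
      rw [← Multiset.sum_cons, Multiset.cons_erase hb]
    omega

/-- Adding a part `b` to a partition of `k - b` gives a partition of `k`. -/
def consPart {k b : ℕ} (hb1 : 0 < b) (hbk : b ≤ k) (μ : Nat.Partition (k - b)) :
    Nat.Partition k where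
  parts := b ::ₘ μ.parts
  parts_pos := fun h => by
    rcases Multiset.mem_cons.1 h with h | h
    · exact h ▸ hb1
    · exact μ.parts_pos h
  parts_sum := by rw [Multiset.sum_cons, μ.parts_sum]; omega

lemma F_rec (p : ℕ → ℂ) (k : ℕ) :
    (k:ℂ) * F p k = ∑ b ∈ Finset.Icc 1 k, p b * F p (k - b) := by
  classical
  rw [F, Finset.mul_sum]
  have key : ∀ P : Nat.Partition k, (k:ℂ) * W p P.parts
      = ∑ s ∈ P.parts.toFinset, ((P.parts.count s : ℂ) * s) * W p P.parts := by
    intro P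
    rw [← Finset.sum_mul]
    congr 1
    have h2 : ((k : ℕ):ℂ) = ∑ s ∈ P.parts.toFinset, P.parts.count s • ((s:ℕ):ℂ) := by
      conv_lhs => rw [← P.parts_sum]
      rw [Nat.cast_multiset_sum, Finset.sum_multiset_map_count]
    rw [h2]
    exact Finset.sum_congr rfl fun s _ => by rw [nsmul_eq_mul]
  rw [Finset.sum_congr rfl (fun P _ => key P)]
  have hleft := Finset.sum_sigma' (Finset.univ : Finset (Nat.Partition k))
    (fun P => P.parts.toFinset)
    (fun P s => ((P.parts.count s : ℂ) * s) * W p P.parts)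
  rw [hleft]
  have hright : ∀ b ∈ Finset.Icc 1 k,
      p b * F p (k-b) = ∑ μ : Nat.Partition (k-b), p b * W p μ.parts := by
    intro b _; rw [F, Finset.mul_sum]
  rw [Finset.sum_congr rfl hright]
  have hright2 := Finset.sum_sigma' (Finset.Icc 1 k)
    (fun b => (Finset.univ : Finset (Nat.Partition (k - b))))
    (fun b μ => p b * W p μ.parts)
  rw [hright2]
  refine Finset.sum_bij'
    (fun t ht => ⟨t.2, erasePart t.1 t.2
      (Multiset.mem_toFinset.1 (Finset.mem_sigma.1 ht).2)⟩)
    (fun s hs => ⟨consPart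
      (Finset.mem_Icc.1 (Finset.mem_sigma.1 hs).1).1
      (Finset.mem_Icc.1 (Finset.mem_sigma.1 hs).1).2 s.2, s.1⟩)
    ?_ ?_ ?_ ?_ ?_
  · rintro ⟨P, b⟩ ht
    have hb : b ∈ P.parts := Multiset.mem_toFinset.1 (Finset.mem_sigma.1 ht).2
    rw [Finset.mem_sigma]
    refine ⟨Finset.mem_Icc.2 ⟨P.parts_pos hb, ?_⟩, Finset.mem_univ _⟩
    have h1 : b ≤ P.parts.sum := Multiset.single_le_sum (fun x _ => Nat.zero_le x) _ hb
    rw [P.parts_sum] at h1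
    exact h1
  · rintro ⟨b, μ⟩ hs
    rw [Finset.mem_sigma]
    exact ⟨Finset.mem_univ _, Multiset.mem_toFinset.2 (Multiset.mem_cons_self _ _)⟩
  · rintro ⟨P, b⟩ ht
    have hb : b ∈ P.parts := Multiset.mem_toFinset.1 (Finset.mem_sigma.1 ht).2
    exact Sigma.ext (Nat.Partition.ext (Multiset.cons_erase hb)) (HEq.refl b)
  · rintro ⟨b, μ⟩ hs
    exact Sigma.ext rfl (heq_of_eq (Nat.Partition.ext (Multiset.erase_cons_head _ _)))
  · rintro ⟨P, b⟩ ht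
    have hb : b ∈ P.parts := Multiset.mem_toFinset.1 (Finset.mem_sigma.1 ht).2
    have hpos : 0 < b := P.parts_pos hb
    have hc := W_cons p b hpos (P.parts.erase b)
    rw [Multiset.cons_erase hb] at hc
    have hcount : ((P.parts.erase b).count b : ℂ) + 1 = (P.parts.count b : ℂ) := by
      have h1 : (P.parts.erase b).count b + 1 = P.parts.count b := by
        rw [Multiset.count_erase_self]
        have := Multiset.one_le_count_iff_mem.2 hb
        omega
      exact_mod_cast congrArg (fun t : ℕ => (t : ℂ)) h1
    rw [hcount] at hc
    calc ((P.parts.count b : ℂ) * b) * W p P.parts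
        = ((b:ℂ) * (P.parts.count b : ℂ)) * W p P.parts := by ring
      _ = p b * W p (P.parts.erase b) := hc
      _ = p b * W p ((erasePart P b hb).parts) := rfl

lemma hh_eq_F (x : ℕ → ℂ) (n : ℕ) : ∀ k, hh x k n = F (fun b => pp x b n) k := by
  intro k
  induction k using Nat.strong_induction_on with
  | _ k ih =>
    match k with
    | 0 => rw [F_zero, hh_zero]
    | (k+1) =>
      have h1 := newton x n (k+1)
      have h2 := F_rec (fun b => pp x b n) (k+1)
      have h3 : (∑ b ∈ Finset.Icc 1 (k+1), pp x b n * hh x (k+1-b) n)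
          = ∑ b ∈ Finset.Icc 1 (k+1), pp x b n * F (fun b => pp x b n) (k+1-b) := by
        refine Finset.sum_congr rfl fun b hb => ?_
        rw [ih (k+1-b) (by simp only [Finset.mem_Icc] at hb; omega)]
      have hk0 : (((k:ℕ)+1 : ℕ):ℂ) ≠ 0 := by
        exact_mod_cast (Nat.cast_ne_zero (R := ℂ)).2 (Nat.succ_ne_zero k)
      apply mul_left_cancel₀ hk0
      push_cast at h1 h2 ⊢
      rw [h1, h3, ← h2]

end SPowerAux

noncomputable def xv (r : ℕ) (i : ℕ) (j : ZMod r) (m : ℕ) : ℂ :=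
  eps r ^ (j.val * m) / (m : ℂ) ^ i

lemma eps_pow_r (r : ℕ) (hr : 0 < r) : eps r ^ r = 1 := by
  rw [eps, ← Complex.exp_nat_mul]
  have hr' : (r:ℂ) ≠ 0 := Nat.cast_ne_zero.2 hr.ne'
  have h : (r:ℂ) * (2 * Real.pi * Complex.I / r) = 2 * Real.pi * Complex.I := by
    field_simp
  rw [h, Complex.exp_two_pi_mul_I]

lemma eps_pow_mod (r : ℕ) (hr : 0 < r) (a : ℕ) : eps r ^ a = eps r ^ (a % r) := by
  conv_lhs => rw [← Nat.mod_add_div a r]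
  rw [pow_add, pow_mul, eps_pow_r r hr, one_pow, mul_one]

lemma eps_pow_congr {r : ℕ} (hr : 0 < r) {a b : ℕ} (h : a % r = b % r) :
    eps r ^ a = eps r ^ b := by
  rw [eps_pow_mod r hr a, eps_pow_mod r hr b, h]

lemma A_single (r : ℕ) (hr : 0 < r) (n i : ℕ) (j : ZMod r) (b : ℕ) :
    Aword r n [((b * i, (b : ZMod r) * j) : QLetter r)] = SPowerAux.pp (xv r i j) b n := by
  haveI : NeZero r := ⟨hr.ne'⟩
  rw [Aword, SPowerAux.pp]
  refine Finset.sum_congr rfl fun m hm => ?_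
  have h0 : Aword r (m-1) [] = 1 := rfl
  rw [h0, mul_one, xv]
  show eps r ^ (((b : ZMod r) * j).val * m) / (m : ℂ) ^ (b * i)
      = (eps r ^ (j.val * m) / (m : ℂ) ^ i) ^ b
  rw [div_pow, ← pow_mul, ← pow_mul]
  congr 1
  · refine eps_pow_congr hr ?_
    have h1 : ((b : ZMod r) * j).val * m ≡ b % r * j.val * m [MOD r] := by
      rw [ZMod.val_mul, ZMod.val_natCast]
      exact (Nat.mod_modEq _ r).mul_right m
    have h2 : b % r * j.val * m ≡ b * j.val * m [MOD r] :=
      ((Nat.mod_modEq b r).mul_right j.val).mul_right m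
    have h3 := h1.trans h2
    have h4 : b * j.val * m = j.val * m * b := by ring
    rw [h4] at h3
    exact h3
  · rw [Nat.mul_comm]

lemma S_rep (r i : ℕ) (j : ZMod r) :
    ∀ (k n : ℕ), Sword r n (List.replicate k ((i, j) : QLetter r))
      = SPowerAux.hh (xv r i j) k n := by
  intro k
  induction k with
  | zero => intro n; rfl
  | succ k ih =>
      intro n
      rw [List.replicate_succ, Sword, SPowerAux.hh_succ]
      refine Finset.sum_congr rfl fun m hm => ?_
      rw [ih m, xv]


/-- `S_{a^k}(n)` in terms of length-one sums, summed over integer partitions of `k`. -/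
theorem S_power_letter (r : ℕ) (hr : 0 < r) (n : ℕ) (hn : 0 < n)
    (i : ℕ) (hi : 0 < i) (j : ZMod r) (k : ℕ) (hk : 1 ≤ k) :
    Sword r n (List.replicate k ((i, j) : QLetter r)) =
      ∑ P : Nat.Partition k,
        (∏ s ∈ Finset.Icc 1 k, (1 : ℂ) / Nat.factorial (Multiset.count s P.parts)) *
          (P.parts.map fun b =>
            (1 : ℂ) / b * Aword r n [((b * i, (b : ZMod r) * j) : QLetter r)]).prod := by
  have hx := S_rep r i j k n
  rw [hx, SPowerAux.hh_eq_F, SPowerAux.F]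
  refine Finset.sum_congr rfl fun P _ => ?_
  rw [SPowerAux.W]
  have hsub : P.parts.toFinset ⊆ Finset.Icc 1 k := by
    intro s hs
    have hsp : s ∈ P.parts := Multiset.mem_toFinset.1 hs
    have h1 : s ≤ P.parts.sum := Multiset.single_le_sum (fun x _ => Nat.zero_le x) _ hsp
    rw [P.parts_sum] at h1
    exact Finset.mem_Icc.2 ⟨P.parts_pos hsp, h1⟩
  congr 1
  · rw [SPowerAux.zinv]
    refine Finset.prod_subset hsub fun s _ hs => ?_
    rw [Multiset.count_eq_zero.2 (fun h => hs (Multiset.mem_toFinset.2 h)),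
      Nat.factorial_zero]
    norm_num
  · refine congrArg Multiset.prod (Multiset.map_congr rfl fun b hb => ?_)
    rw [A_single r hr n i j b]
    ring
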